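/- arXiv:1909.02718 — 2 statements merged into one kernel-verified Lean document; each statement's English description precedes it below -/
import Mathlib

section
/- The family G^cs of graphs defined using strictly positive weight functions coincides with the family G^cs_0 defined using nonnegative weight functions: a graph G satisfies s(G,w) = cs(G,w) for all positive weight functions w if and only if it satisfies s(G,w) = cs(G,w) for all nonnegative weight functions w. -/
/-!
For a nonnegative weight `w` with a minimum safe set `S`, raise the weights by `η` on `S` and by
`η / |V|` off `S`. The new weight is positive, `S` stays safe (each component inside `S` gains at
least `η`, each component outside gains at most `η`), and every set gains at most `|V| η`. Graphs
in `G^cs` therefore have, for every `ε > 0`, a connected set `T` of weight at most `s(G, w) + ε`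
that is safe for `w` up to an error `ε`. Only finitely many sets exist, so one `T` works for
arbitrarily small `ε`, and it is a connected safe set of weight at most `s(G, w)`.
-/

open SimpleGraph
open scoped Classical

variable {V : Type*} [Fintype V]

noncomputable def setWeight (w : V → ℝ) (A : Set V) : ℝ :=
  ∑ v : V, if v ∈ A then w v else 0

def IsComponentOf (G : SimpleGraph V) (S C : Set V) : Prop :=
  ∃ c : (G.induce S).ConnectedComponent,
    C = Subtype.val '' {x : ↥S | (G.induce S).connectedComponentMk x = c}

def Touches (G : SimpleGraph V) (C D : Set V) : Prop :=
  ∃ a ∈ C, ∃ b ∈ D, G.Adj a b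

def IsSafeSet (G : SimpleGraph V) (w : V → ℝ) (S : Set V) : Prop :=
  S.Nonempty ∧ S ≠ Set.univ ∧
    ∀ C D : Set V, IsComponentOf G S C → IsComponentOf G Sᶜ D → Touches G C D →
      setWeight w D ≤ setWeight w C

def IsConnSafeSet (G : SimpleGraph V) (w : V → ℝ) (S : Set V) : Prop :=
  IsSafeSet G w S ∧ (G.induce S).Connected

noncomputable def safeNumber (G : SimpleGraph V) (w : V → ℝ) : ℝ :=
  sInf (setWeight w '' {S | IsSafeSet G w S})

noncomputable def connSafeNumber (G : SimpleGraph V) (w : V → ℝ) : ℝ :=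
  sInf (setWeight w '' {S | IsConnSafeSet G w S})

def InGcs (G : SimpleGraph V) : Prop :=
  ∀ w : V → ℝ, (∀ v, 0 < w v) → safeNumber G w = connSafeNumber G w

open Filter Topology

section SetWeight

variable {w w₁ w₂ : V → ℝ} {A : Set V}

lemma setWeight_add :
    setWeight (w₁ + w₂) A = setWeight w₁ A + setWeight w₂ A := by
  simp only [setWeight, ← Finset.sum_add_distrib]
  congr with v
  split_ifs <;> simp

lemma setWeight_le_setWeight (h : ∀ v ∈ A, w₁ v ≤ w₂ v) : setWeight w₁ A ≤ setWeight w₂ A :=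
  Finset.sum_le_sum fun v _ => by split_ifs with hv; exacts [h v hv, le_rfl]

lemma setWeight_const_le {c : ℝ} (hc : 0 ≤ c) (A : Set V) :
    setWeight (fun _ => c) A ≤ Fintype.card V * c := by
  unfold setWeight
  simpa using Finset.sum_le_card_nsmul Finset.univ _ c fun v _ => by split_ifs <;> simp [hc]

lemma le_setWeight_of_mem (hw : ∀ v, 0 ≤ w v) {v : V} (hv : v ∈ A) : w v ≤ setWeight w A := by
  unfold setWeight
  simpa [hv] using Finset.single_le_sum (f := fun u => if u ∈ A then w u else 0)
    (fun u _ => by split_ifs <;> simp [hw]) (Finset.mem_univ v)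

end SetWeight

omit [Fintype V] in
lemma IsComponentOf.subset {G : SimpleGraph V} {S C : Set V} (h : IsComponentOf G S C) : C ⊆ S := by
  obtain ⟨c, rfl⟩ := h
  rintro _ ⟨x, -, rfl⟩
  exact x.2

section SafeNumber

variable {G : SimpleGraph V} {w : V → ℝ} {S : Set V}

lemma safeNumber_le (h : IsSafeSet G w S) : safeNumber G w ≤ setWeight w S :=
  csInf_le ((Set.toFinite _).image _).bddBelow ⟨S, h, rfl⟩

lemma connSafeNumber_le (h : IsConnSafeSet G w S) : connSafeNumber G w ≤ setWeight w S :=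
  csInf_le ((Set.toFinite _).image _).bddBelow ⟨S, h, rfl⟩

lemma exists_isSafeSet_setWeight_eq (h : ∃ S, IsSafeSet G w S) :
    ∃ S, IsSafeSet G w S ∧ setWeight w S = safeNumber G w :=
  (Set.Nonempty.image (s := {S | IsSafeSet G w S}) _ h).csInf_mem ((Set.toFinite _).image _)

lemma exists_isConnSafeSet_setWeight_eq (h : ∃ S, IsConnSafeSet G w S) :
    ∃ S, IsConnSafeSet G w S ∧ setWeight w S = connSafeNumber G w :=
  (Set.Nonempty.image (s := {S | IsConnSafeSet G w S}) _ h).csInf_mem ((Set.toFinite _).image _)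

lemma safeNumber_le_connSafeNumber (h : ∃ S, IsConnSafeSet G w S) :
    safeNumber G w ≤ connSafeNumber G w := by
  obtain ⟨T, hT, hTw⟩ := exists_isConnSafeSet_setWeight_eq h
  exact hTw ▸ safeNumber_le hT.1

lemma safeNumber_eq_connSafeNumber_of_forall_not_isSafeSet (h : ∀ S, ¬IsSafeSet G w S) :
    safeNumber G w = connSafeNumber G w := by
  simp [safeNumber, connSafeNumber, IsConnSafeSet, h]

/-- `connSafeNumber` is the junk value `sInf ∅ = 0` when there is no connected safe set, whereas
a positive weight makes `safeNumber` positive. -/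
lemma exists_isConnSafeSet_of_safeNumber_eq (hw : ∀ v, 0 < w v) (hS : IsSafeSet G w S)
    (heq : safeNumber G w = connSafeNumber G w) : ∃ T, IsConnSafeSet G w T := by
  by_contra hnone
  obtain ⟨S₀, hS₀, hS₀w⟩ := exists_isSafeSet_setWeight_eq ⟨S, hS⟩
  obtain ⟨v, hv⟩ := hS₀.1
  have hpos : 0 < safeNumber G w :=
    hS₀w ▸ (hw v).trans_le (le_setWeight_of_mem (fun u => (hw u).le) hv)
  have hzero : connSafeNumber G w = 0 := by
    simp [connSafeNumber, not_exists.1 hnone]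
  exact hpos.ne' (heq.trans hzero)

end SafeNumber

def IsSafeSetUpTo (G : SimpleGraph V) (w : V → ℝ) (ε : ℝ) (S : Set V) : Prop :=
  S.Nonempty ∧ S ≠ Set.univ ∧
    ∀ C D : Set V, IsComponentOf G S C → IsComponentOf G Sᶜ D → Touches G C D →
      setWeight w D ≤ setWeight w C + ε

section SafeSetUpTo

variable {G : SimpleGraph V} {w : V → ℝ} {S : Set V} {ε : ℝ}

lemma IsSafeSetUpTo.mono {δ : ℝ} (h : IsSafeSetUpTo G w ε S) (hεδ : ε ≤ δ) :
    IsSafeSetUpTo G w δ S :=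
  ⟨h.1, h.2.1, fun C D hC hD hCD => (h.2.2 C D hC hD hCD).trans (by linarith)⟩

lemma isSafeSet_of_forall_isSafeSetUpTo (h : ∀ ε > 0, IsSafeSetUpTo G w ε S) :
    IsSafeSet G w S :=
  ⟨(h 1 one_pos).1, (h 1 one_pos).2.1, fun C D hC hD hCD =>
    le_of_forall_pos_le_add fun ε hε => (h ε hε).2.2 C D hC hD hCD⟩

lemma exists_pos_weight_isSafeSet (hw : ∀ v, 0 ≤ w v) (hS : IsSafeSet G w S) (hε : 0 < ε) :
    ∃ w' : V → ℝ, (∀ v, 0 < w' v) ∧ (∀ v, w v ≤ w' v) ∧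
      (∀ A, setWeight w' A ≤ setWeight w A + ε) ∧ IsSafeSet G w' S := by
  set N : ℝ := (Fintype.card V : ℝ)
  have hN : 1 ≤ N := by
    obtain ⟨v, -⟩ := hS.1
    exact Nat.one_le_cast.2 (Fintype.card_pos_iff.2 ⟨v⟩)
  set η := ε / N
  have hη : 0 < η := by positivity
  let u : V → ℝ := fun v => if v ∈ S then η else η / N
  have hu_pos : ∀ v, 0 < u v := fun v => by dsimp only [u]; split_ifs <;> positivity
  have hu_le : ∀ v, u v ≤ η := fun v => by
    dsimp only [u]; split_ifs; exacts [le_rfl, div_le_self hη.le hN]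
  refine ⟨w + u, fun v => add_pos_of_nonneg_of_pos (hw v) (hu_pos v),
    fun v => le_add_of_nonneg_right (hu_pos v).le, fun A => ?_, hS.1, hS.2.1,
    fun C D hC hD hCD => ?_⟩
  · rw [setWeight_add]
    gcongr
    calc setWeight u A ≤ setWeight (fun _ => η) A := setWeight_le_setWeight fun v _ => hu_le v
      _ ≤ N * η := setWeight_const_le hη.le A
      _ = ε := mul_div_cancel₀ ε (by positivity)
  · obtain ⟨c, hc, -⟩ := id hCD
    have hgainD : setWeight u D ≤ η :=
      calc setWeight u D ≤ setWeight (fun _ => η / N) D :=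
            setWeight_le_setWeight fun v hv => by simp [u, show v ∉ S from hD.subset hv]
        _ ≤ N * (η / N) := setWeight_const_le (by positivity) D
        _ = η := mul_div_cancel₀ η (by positivity)
    have hgainC : η ≤ setWeight u C :=
      calc η = u c := by simp [u, hC.subset hc]
        _ ≤ setWeight u C := le_setWeight_of_mem (fun v => (hu_pos v).le) hc
    rw [setWeight_add, setWeight_add]
    linarith [hS.2.2 C D hC hD hCD]

lemma exists_connected_isSafeSetUpTo (hG : InGcs G) (hw : ∀ v, 0 ≤ w v) (hS : IsSafeSet G w S)
    (hε : 0 < ε) :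
    ∃ T, (G.induce T).Connected ∧ IsSafeSetUpTo G w ε T ∧ setWeight w T ≤ setWeight w S + ε := by
  obtain ⟨w', hw'_pos, hww', hw'_le, hS'⟩ := exists_pos_weight_isSafeSet hw hS hε
  have heq := hG w' hw'_pos
  obtain ⟨T, hT, hTw⟩ :=
    exists_isConnSafeSet_setWeight_eq (exists_isConnSafeSet_of_safeNumber_eq hw'_pos hS' heq)
  refine ⟨T, hT.2, ⟨hT.1.1, hT.1.2.1, fun C D hC hD hCD => ?_⟩, ?_⟩
  · calc setWeight w D ≤ setWeight w' D := setWeight_le_setWeight fun v _ => hww' v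
      _ ≤ setWeight w' C := hT.1.2.2 C D hC hD hCD
      _ ≤ setWeight w C + ε := hw'_le C
  · calc setWeight w T ≤ setWeight w' T := setWeight_le_setWeight fun v _ => hww' v
      _ = safeNumber G w' := hTw.trans heq.symm
      _ ≤ setWeight w' S := safeNumber_le hS'
      _ ≤ setWeight w S + ε := hw'_le S

end SafeSetUpTo

lemma exists_forall_pos_of_finite {α : Type*} [Finite α] {P : ℝ → α → Prop}
    (hmono : ∀ x, Monotone (P · x)) (h : ∀ ε > 0, ∃ x, P ε x) : ∃ x, ∀ ε > 0, P ε x := by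
  by_contra! hfail
  have hsmall : ∀ᶠ ε in 𝓝[>] (0 : ℝ), ∀ x, ¬P ε x := by
    refine eventually_all.2 fun x => ?_
    obtain ⟨ε, hε, hP⟩ := hfail x
    filter_upwards [Ioo_mem_nhdsGT hε] with δ hδ hPδ using hP (hmono x hδ.2.le hPδ)
  obtain ⟨ε, hnone, hε⟩ := (hsmall.and self_mem_nhdsWithin).exists
  obtain ⟨x, hx⟩ := h ε hε
  exact hnone x hx

theorem stmt_4 (G : SimpleGraph V) :
    InGcs G ↔ ∀ w : V → ℝ, (∀ v, 0 ≤ w v) → safeNumber G w = connSafeNumber G w := by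
  refine ⟨fun hG w hw => ?_, fun h w hw => h w fun v => (hw v).le⟩
  by_cases hsafe : ∃ S, IsSafeSet G w S
  swap
  · exact safeNumber_eq_connSafeNumber_of_forall_not_isSafeSet (not_exists.1 hsafe)
  obtain ⟨S, hS, hSw⟩ := exists_isSafeSet_setWeight_eq hsafe
  obtain ⟨T, hT⟩ := exists_forall_pos_of_finite
    (P := fun ε T => (G.induce T).Connected ∧ IsSafeSetUpTo G w ε T ∧
      setWeight w T ≤ setWeight w S + ε)
    (fun T ε δ hεδ ⟨hconn, hTsafe, hle⟩ => ⟨hconn, hTsafe.mono hεδ, by linarith⟩)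
    (fun ε hε => exists_connected_isSafeSetUpTo hG hw hS hε)
  have hTconn : IsConnSafeSet G w T :=
    ⟨isSafeSet_of_forall_isSafeSetUpTo fun ε hε => (hT ε hε).2.1, (hT 1 one_pos).1⟩
  have hTw : setWeight w T ≤ safeNumber G w :=
    hSw ▸ le_of_forall_pos_le_add fun ε hε => (hT ε hε).2.2
  exact (safeNumber_le_connSafeNumber ⟨T, hTconn⟩).antisymm ((connSafeNumber_le hTconn).trans hTw)
end

section
/- If a connected graph G is contractible to the path P5 (with vertices u1u2u3u4u5) so that the bags corresponding to u2 and u4 induce connected subgraphs of G, then G does not belong to G^cs. -/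
/-!
Let `B₀, …, B₄` be the bags. Pick an edge `xb` with `x ∈ B₁`, `b ∈ B₀` and an edge `ud` with
`u ∈ B₃`, `d ∈ B₄`; give `x` and `u` weight `1 + ε²`, `b` and `d` weight `1`, the vertices of `B₂`
weight `ε` and all other vertices weight `ε³`, for `ε` small compared with `1 / |V|`.

Then `B₁ ∪ B₃` is a safe set of weight `< 2 + ε`: each of its components contains the connected
bag `B₁` or `B₃`, hence weighs at least `1 + ε²`, while each component of the complement lies in
one of `B₀`, `B₂`, `B₄` and weighs at most `1 + ε²`.

A connected safe set `T` outweighs every connected set disjoint from it, because such a set lies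
in a component of `Tᶜ` adjacent to `T`. If `T` misses `u` and `d`, it therefore weighs at least
`w u + w d = 2 + ε²`, which forces `x, b ∈ T`; then either `T` meets `B₂`, or `T` stays on the
`B₀B₁` side and misses the connected set `B₃ ∪ {d}` together with an edge into `B₂`. The case
that `T` misses `x` and `b` is the mirror image, and otherwise `T` meets both sides and hence
`B₂`. In every case `T` weighs at least `2 + ε`, so `s(G, w) < cs(G, w)`.
-/

open SimpleGraph
open scoped Classical

variable {V : Type*} [Fintype V]

def ContractibleTo {W : Type*} (G : SimpleGraph V) (H : SimpleGraph W) (φ : V → W) : Prop :=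
  Function.Surjective φ ∧ ∀ i j : W, i ≠ j →
    ((∃ a b : V, φ a = i ∧ φ b = j ∧ G.Adj a b) ↔ H.Adj i j)

set_option linter.unusedSectionVars false

section SetWeight

variable {w : V → ℝ} {A B : Set V}

lemma setWeight_coe_finset (s : Finset V) : setWeight w ↑s = ∑ v ∈ s, w v := by
  simp [setWeight, Finset.sum_ite_mem]

lemma setWeight_mono (hw : ∀ v, 0 ≤ w v) (h : A ⊆ B) : setWeight w A ≤ setWeight w B := by
  refine Finset.sum_le_sum fun v _ => ?_
  by_cases hA : v ∈ A
  · simp [hA, h hA]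
  · by_cases hB : v ∈ B <;> simp [hA, hB, hw v]

lemma sum_le_setWeight (hw : ∀ v, 0 ≤ w v) {s : Finset V} (h : ↑s ⊆ A) :
    ∑ v ∈ s, w v ≤ setWeight w A :=
  setWeight_coe_finset (w := w) s ▸ setWeight_mono hw h

lemma le_setWeight (hw : ∀ v, 0 ≤ w v) {a : V} (ha : a ∈ A) : w a ≤ setWeight w A := by
  simpa using sum_le_setWeight hw (s := {a}) (by simpa using ha)

lemma setWeight_pos (hw : ∀ v, 0 < w v) (hA : A.Nonempty) : 0 < setWeight w A :=
  (hw _).trans_le (le_setWeight (fun v => (hw v).le) hA.some_mem)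

lemma setWeight_pair {a b : V} (hab : a ≠ b) : setWeight w {a, b} = w a + w b := by
  rw [← Finset.sum_pair hab, ← setWeight_coe_finset, Finset.coe_pair]

lemma add_add_le_setWeight (hw : ∀ v, 0 ≤ w v) {a b c : V} (ha : a ∈ A) (hb : b ∈ A)
    (hc : c ∈ A) (hab : a ≠ b) (hac : a ≠ c) (hbc : b ≠ c) :
    w a + w b + w c ≤ setWeight w A := by
  have := sum_le_setWeight hw (A := A) (s := {a, b, c})
    (by simp [Set.insert_subset_iff, ha, hb, hc])
  rwa [Finset.sum_insert (by simp [hab, hac]), Finset.sum_pair hbc, ← add_assoc] at this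

lemma setWeight_le_sum_add (hw : ∀ v, 0 ≤ w v) {c : ℝ} (hc : 0 ≤ c) (s : Finset V)
    (h : ∀ v ∈ A, v ∉ s → w v ≤ c) :
    setWeight w A ≤ ∑ v ∈ s, w v + Fintype.card V * c := by
  calc setWeight w A ≤ ∑ v, ((if v ∈ s then w v else 0) + c) := by
        refine Finset.sum_le_sum fun v _ => ?_
        split_ifs with hA hs hs
        · linarith
        · linarith [h v hA hs]
        · linarith [hw v]
        · linarith
    _ = ∑ v ∈ s, w v + Fintype.card V * c := by
        simp [Finset.sum_add_distrib, Finset.sum_ite_mem]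

end SetWeight

section Components

variable {G : SimpleGraph V} {S C A : Set V}

lemma exists_isComponentOf_mem {a : V} (ha : a ∈ S) : ∃ C, IsComponentOf G S C ∧ a ∈ C :=
  ⟨_, ⟨(G.induce S).connectedComponentMk ⟨a, ha⟩, rfl⟩, ⟨a, ha⟩, rfl, rfl⟩

lemma isComponentOf_self (hS : (G.induce S).Connected) : IsComponentOf G S S := by
  obtain ⟨a⟩ := hS.nonempty
  refine ⟨(G.induce S).connectedComponentMk a, Set.ext fun y => ⟨fun hy => ?_, ?_⟩⟩
  · exact ⟨⟨y, hy⟩, ConnectedComponent.sound (hS.preconnected _ _), rfl⟩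
  · rintro ⟨y, -, rfl⟩
    exact y.2

namespace IsComponentOf

lemma subset_s7 (hC : IsComponentOf G S C) : C ⊆ S := by
  obtain ⟨c, rfl⟩ := hC
  rintro _ ⟨y, -, rfl⟩
  exact y.2

lemma nonempty (hC : IsComponentOf G S C) : C.Nonempty := by
  obtain ⟨c, rfl⟩ := hC
  obtain ⟨a, ha⟩ := c.exists_rep
  exact ⟨a, a, ha, rfl⟩

lemma mem_iff_reachable (hC : IsComponentOf G S C) {a : S} (ha : ↑a ∈ C) {b : S} :
    ↑b ∈ C ↔ (G.induce S).Reachable a b := by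
  obtain ⟨c, rfl⟩ := hC
  obtain ⟨a', ha', haa'⟩ := ha
  obtain rfl := Subtype.val_injective haa'
  constructor
  · rintro ⟨b', hb', hbb'⟩
    obtain rfl := Subtype.val_injective hbb'
    exact ConnectedComponent.exact (ha'.trans hb'.symm)
  · intro h
    exact ⟨b, (ConnectedComponent.sound h).symm.trans ha', rfl⟩

lemma subset_of_preconnected (hC : IsComponentOf G S C) (hAS : A ⊆ S)
    (hA : (G.induce A).Preconnected) {a : V} (ha : a ∈ A) (haC : a ∈ C) : A ⊆ C := fun y hy =>
  (hC.mem_iff_reachable (a := ⟨a, hAS ha⟩) haC).2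
    ((hA ⟨a, ha⟩ ⟨y, hy⟩).map (G.induceHomOfLE hAS).toHom)

lemma touches (hG : G.Connected) {T D : Set V} (hD : IsComponentOf G Tᶜ D)
    (hT : T.Nonempty) : Touches G T D := by
  obtain ⟨a, haD⟩ := hD.nonempty
  obtain ⟨t, ht⟩ := hT
  obtain ⟨p⟩ := hG.preconnected a t
  obtain ⟨e, -, he₁, he₂⟩ := p.exists_boundary_dart D haD fun h => hD.subset_s7 h ht
  refine ⟨e.snd, by_contra fun hsnd => he₂ ?_, e.fst, he₁, e.adj.symm⟩
  refine (hD.mem_iff_reachable (a := ⟨e.fst, hD.subset_s7 he₁⟩) he₁ (b := ⟨e.snd, hsnd⟩)).2 ?_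
  exact Adj.reachable e.adj

end IsComponentOf

lemma IsConnSafeSet.setWeight_le {w : V → ℝ} {T : Set V} (hG : G.Connected)
    (hw : ∀ v, 0 ≤ w v) (hT : IsConnSafeSet G w T) (hA : (G.induce A).Connected)
    (hAT : Disjoint A T) : setWeight w A ≤ setWeight w T := by
  obtain ⟨⟨hTne, -, hsafe⟩, hTconn⟩ := hT
  obtain ⟨⟨a, ha⟩⟩ := hA.nonempty
  obtain ⟨D, hD, haD⟩ := exists_isComponentOf_mem (G := G) (S := Tᶜ) (Set.disjoint_left.1 hAT ha)
  calc setWeight w A ≤ setWeight w D :=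
        setWeight_mono hw (hD.subset_of_preconnected hAT.subset_compl_right hA.preconnected ha haD)
    _ ≤ setWeight w T := hsafe T D (isComponentOf_self hTconn) hD (hD.touches hG hTne)

lemma eq_of_reachable_induce {α : Type*} {f : V → α}
    (hf : ∀ a ∈ S, ∀ c ∈ S, G.Adj a c → f a = f c) {a c : S}
    (h : (G.induce S).Reachable a c) : f a = f c := by
  by_contra hne
  obtain ⟨p⟩ := h
  obtain ⟨e, -, he₁, he₂⟩ := p.exists_boundary_dart {v : S | f v = f a} rfl fun h => hne h.symm
  exact he₂ ((hf _ e.fst.2 _ e.snd.2 e.adj).symm.trans he₁)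

lemma exists_eq_of_reachable_induce {f : V → ℕ} (hf : ∀ ⦃a c⦄, G.Adj a c → f c ≤ f a + 1)
    {a c : S} (h : (G.induce S).Reachable a c) {k : ℕ} (ha : f a < k) (hc : k ≤ f c) :
    ∃ z ∈ S, f z = k := by
  obtain ⟨p⟩ := h
  obtain ⟨e, -, he₁, he₂⟩ := p.exists_boundary_dart {v | f v < k} ha (by simpa using hc)
  have : f e.snd ≤ f e.fst + 1 := hf e.adj
  simp only [Set.mem_ofPred_eq, not_lt] at he₁ he₂
  exact ⟨e.snd, e.snd.2, by omega⟩

end Components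

lemma not_inGcs_of_lt {G : SimpleGraph V} {w : V → ℝ} {S : Set V} (hw : ∀ v, 0 < w v)
    (hS : IsSafeSet G w S) (hlt : ∀ T, IsConnSafeSet G w T → setWeight w S < setWeight w T) :
    ¬ InGcs G := by
  intro h
  have heq := h w hw
  have hfin : ∀ P : Set V → Prop, (setWeight w '' {S | P S}).Finite :=
    fun _ => (Set.toFinite _).image _
  have hs_le : safeNumber G w ≤ setWeight w S := csInf_le (hfin _).bddBelow ⟨S, hS, rfl⟩
  rcases (setWeight w '' {T | IsConnSafeSet G w T}).eq_empty_or_nonempty with he | hne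
  · obtain ⟨S', hS', hS'eq⟩ :=
      Set.Nonempty.csInf_mem (s := setWeight w '' {S | IsSafeSet G w S}) ⟨_, S, hS, rfl⟩ (hfin _)
    have := setWeight_pos hw hS'.1
    rw [connSafeNumber, he, Real.sInf_empty, safeNumber, ← hS'eq] at heq
    linarith
  · obtain ⟨T, hT, hTeq⟩ := hne.csInf_mem (hfin _)
    have := hlt T hT
    rw [← connSafeNumber, ← heq] at hTeq
    linarith

section Contraction

variable {W : Type*} {G : SimpleGraph V} {H : SimpleGraph W} {φ : V → W}

lemma ContractibleTo.adj_of_adj (hφ : ContractibleTo G H φ) {a c : V} (h : G.Adj a c)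
    (hne : φ a ≠ φ c) : H.Adj (φ a) (φ c) :=
  (hφ.2 _ _ hne).1 ⟨a, c, rfl, rfl, h⟩

lemma ContractibleTo.exists_adj (hφ : ContractibleTo G H φ) {i j : W} (h : H.Adj i j) :
    ∃ a c, φ a = i ∧ φ c = j ∧ G.Adj a c :=
  (hφ.2 _ _ h.ne).2 h

lemma ContractibleTo.val_le_succ_of_adj {n : ℕ} {φ : V → Fin n}
    (hφ : ContractibleTo G (pathGraph n) φ) {a c : V} (h : G.Adj a c) :
    (φ c : ℕ) ≤ φ a + 1 := by
  by_cases hne : φ a = φ c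
  · rw [hne]; omega
  · have := pathGraph_adj.1 (hφ.adj_of_adj h hne)
    omega

end Contraction

structure P5Data (G : SimpleGraph V) where
  φ : V → Fin 5
  le_succ_of_adj : ∀ ⦃a c : V⦄, G.Adj a c → (φ c : ℕ) ≤ φ a + 1
  connected_one : (G.induce (φ ⁻¹' {1})).Connected
  connected_three : (G.induce (φ ⁻¹' {3})).Connected
  (x b u d y₁ z₁ y₃ z₃ : V)
  φ_x : φ x = 1
  φ_b : φ b = 0
  φ_u : φ u = 3
  φ_d : φ d = 4
  φ_y₁ : φ y₁ = 1
  φ_z₁ : φ z₁ = 2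
  φ_y₃ : φ y₃ = 3
  φ_z₃ : φ z₃ = 2
  adj_xb : G.Adj x b
  adj_ud : G.Adj u d
  adj_y₁z₁ : G.Adj y₁ z₁
  adj_y₃z₃ : G.Adj y₃ z₃

lemma nonempty_p5Data {G : SimpleGraph V} {φ : V → Fin 5}
    (hφ : ContractibleTo G (pathGraph 5) φ) (h2 : (G.induce (φ ⁻¹' {1})).Connected)
    (h4 : (G.induce (φ ⁻¹' {3})).Connected) : Nonempty (P5Data G) := by
  obtain ⟨x, b, φ_x, φ_b, adj_xb⟩ := hφ.exists_adj (i := 1) (j := 0) (by simp [pathGraph_adj])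
  obtain ⟨u, d, φ_u, φ_d, adj_ud⟩ := hφ.exists_adj (i := 3) (j := 4) (by simp [pathGraph_adj])
  obtain ⟨y₁, z₁, φ_y₁, φ_z₁, adj₁⟩ := hφ.exists_adj (i := 1) (j := 2) (by simp [pathGraph_adj])
  obtain ⟨y₃, z₃, φ_y₃, φ_z₃, adj₃⟩ := hφ.exists_adj (i := 3) (j := 2) (by simp [pathGraph_adj])
  exact ⟨φ, fun _ _ => hφ.val_le_succ_of_adj, h2, h4, x, b, u, d, y₁, z₁, y₃, z₃,
    φ_x, φ_b, φ_u, φ_d, φ_y₁, φ_z₁, φ_y₃, φ_z₃, adj_xb, adj_ud, adj₁, adj₃⟩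

namespace P5Data

variable {G : SimpleGraph V} (D : P5Data G)

lemma preimage_rev (i : Fin 5) : (fun v => (D.φ v).rev) ⁻¹' {i} = D.φ ⁻¹' {i.rev} := by
  ext v
  simp [Fin.rev_eq_iff]

def rev : P5Data G where
  φ v := (D.φ v).rev
  le_succ_of_adj a c h := by
    have := D.le_succ_of_adj h.symm
    simp only [Fin.val_rev]
    omega
  connected_one := D.preimage_rev 1 ▸ D.connected_three
  connected_three := D.preimage_rev 3 ▸ D.connected_one
  x := D.u
  b := D.d
  u := D.x
  d := D.b
  y₁ := D.y₃
  z₁ := D.z₃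
  y₃ := D.y₁
  z₃ := D.z₁
  φ_x := by rw [D.φ_u]; rfl
  φ_b := by rw [D.φ_d]; rfl
  φ_u := by rw [D.φ_x]; rfl
  φ_d := by rw [D.φ_b]; rfl
  φ_y₁ := by rw [D.φ_y₃]; rfl
  φ_z₁ := by rw [D.φ_z₃]; rfl
  φ_y₃ := by rw [D.φ_y₁]; rfl
  φ_z₃ := by rw [D.φ_z₁]; rfl
  adj_xb := D.adj_ud
  adj_ud := D.adj_xb
  adj_y₁z₁ := D.adj_y₃z₃
  adj_y₃z₃ := D.adj_y₁z₁

noncomputable def weight (ε : ℝ) (v : V) : ℝ :=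
  if v = D.x ∨ v = D.u then 1 + ε ^ 2
  else if v = D.b ∨ v = D.d then 1
  else if D.φ v = 2 then ε
  else ε ^ 3

lemma rev_weight : D.rev.weight = D.weight := by
  funext ε v
  have : (D.φ v).rev = 2 ↔ D.φ v = 2 := by rw [Fin.rev_eq_iff]; rfl
  simp only [weight, rev, this, or_comm]

lemma ne_of_φ_ne {a c : V} (h : D.φ a ≠ D.φ c) : a ≠ c := ne_of_apply_ne D.φ h

variable {D} {ε : ℝ} {v : V} {T : Set V}

lemma weight_pos (hε : 0 < ε) (v : V) : 0 < D.weight ε v := by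
  unfold weight
  split_ifs <;> positivity

lemma weight_x : D.weight ε D.x = 1 + ε ^ 2 := by simp [weight]

lemma weight_u : D.weight ε D.u = 1 + ε ^ 2 := by simp [weight]

lemma weight_b : D.weight ε D.b = 1 := by
  have hx : D.b ≠ D.x := D.ne_of_φ_ne (by simp [D.φ_b, D.φ_x])
  have hu : D.b ≠ D.u := D.ne_of_φ_ne (by simp [D.φ_b, D.φ_u])
  simp [weight, hx, hu]

lemma weight_d : D.weight ε D.d = 1 := by
  have hx : D.d ≠ D.x := D.ne_of_φ_ne (by simp [D.φ_d, D.φ_x])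
  have hu : D.d ≠ D.u := D.ne_of_φ_ne (by simp [D.φ_d, D.φ_u])
  simp [weight, hx, hu]

lemma weight_of_φ_eq_two (hv : D.φ v = 2) : D.weight ε v = ε := by
  have hx : v ≠ D.x := D.ne_of_φ_ne (by simp [hv, D.φ_x])
  have hu : v ≠ D.u := D.ne_of_φ_ne (by simp [hv, D.φ_u])
  have hb : v ≠ D.b := D.ne_of_φ_ne (by simp [hv, D.φ_b])
  have hd : v ≠ D.d := D.ne_of_φ_ne (by simp [hv, D.φ_d])
  simp [weight, hx, hu, hb, hd, hv]

lemma weight_of_φ_ne_two (hv : D.φ v ≠ 2) (hx : v ≠ D.x) (hb : v ≠ D.b) (hu : v ≠ D.u)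
    (hd : v ≠ D.d) : D.weight ε v = ε ^ 3 := by
  simp [weight, hx, hu, hb, hd, hv]

lemma weight_le (hε : 0 ≤ ε) (hε₁ : ε ≤ 1) (hx : v ≠ D.x) (hb : v ≠ D.b) (hu : v ≠ D.u)
    (hd : v ≠ D.d) : D.weight ε v ≤ ε := by
  by_cases hv : D.φ v = 2
  · exact (weight_of_φ_eq_two hv).le
  · rw [weight_of_φ_ne_two hv hx hb hu hd]
    nlinarith [pow_le_one₀ hε hε₁ (n := 2)]

lemma one_add_sq_le_setWeight (hε : 0 < ε) {C : Set V}
    (hC : IsComponentOf G (D.φ ⁻¹' {1, 3}) C) : 1 + ε ^ 2 ≤ setWeight (D.weight ε) C := by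
  have hw : ∀ v, 0 ≤ D.weight ε v := fun v => (weight_pos hε v).le
  obtain ⟨c, hc⟩ := hC.nonempty
  rcases hC.subset_s7 hc with h1 | h3
  · have hsub : D.φ ⁻¹' {1} ⊆ C := hC.subset_of_preconnected (Set.preimage_mono (by simp))
      D.connected_one.preconnected h1 hc
    exact weight_x.symm.trans_le (le_setWeight hw (hsub D.φ_x))
  · have hsub : D.φ ⁻¹' {3} ⊆ C := hC.subset_of_preconnected (Set.preimage_mono (by simp))
      D.connected_three.preconnected h3 hc
    exact weight_u.symm.trans_le (le_setWeight hw (hsub D.φ_u))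

lemma setWeight_le_one_add_sq (hε : 0 < ε) (hNε : (Fintype.card V + 4) * ε = 1) {C : Set V}
    (hC : IsComponentOf G (D.φ ⁻¹' {1, 3})ᶜ C) : setWeight (D.weight ε) C ≤ 1 + ε ^ 2 := by
  have hw : ∀ v, 0 ≤ D.weight ε v := fun v => (weight_pos hε v).le
  obtain ⟨c, hc⟩ := hC.nonempty
  have hbag : ∀ v ∈ C, D.φ v = D.φ c := by
    have hstep : ∀ a ∈ (D.φ ⁻¹' {1, 3})ᶜ, ∀ a' ∈ (D.φ ⁻¹' {1, 3})ᶜ, G.Adj a a' →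
        D.φ a = D.φ a' := by
      intro a ha a' ha' h
      have hFin : ∀ i j : Fin 5, i ∉ ({1, 3} : Set (Fin 5)) → j ∉ ({1, 3} : Set (Fin 5)) →
          (j : ℕ) ≤ i + 1 → (i : ℕ) ≤ j + 1 → i = j := by decide
      exact hFin _ _ ha ha' (D.le_succ_of_adj h) (D.le_succ_of_adj h.symm)
    intro v hv
    exact (eq_of_reachable_induce hstep
      ((hC.mem_iff_reachable (a := ⟨c, hC.subset_s7 hc⟩) hc (b := ⟨v, hC.subset_s7 hv⟩)).1 hv)).symm
  have hc' : D.φ c = 0 ∨ D.φ c = 2 ∨ D.φ c = 4 := by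
    have hFin : ∀ i : Fin 5, i ∉ ({1, 3} : Set (Fin 5)) → i = 0 ∨ i = 2 ∨ i = 4 := by decide
    exact hFin _ (hC.subset_s7 hc)
  rcases hc' with h0 | h2 | h4
  · have := setWeight_le_sum_add hw (pow_nonneg hε.le 3) {D.b} fun v hv hvb => by
      have hv0 : D.φ v = 0 := (hbag v hv).trans h0
      refine (weight_of_φ_ne_two (by simp [hv0]) ?_ (by simpa using hvb) ?_ ?_).le <;>
        rintro rfl <;> simp_all [D.φ_x, D.φ_u, D.φ_d]
    rw [Finset.sum_singleton, weight_b] at this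
    nlinarith
  · have := setWeight_le_sum_add hw hε.le ∅ fun v hv _ =>
      (weight_of_φ_eq_two ((hbag v hv).trans h2)).le
    rw [Finset.sum_empty] at this
    nlinarith
  · have := setWeight_le_sum_add hw (pow_nonneg hε.le 3) {D.d} fun v hv hvd => by
      have hv4 : D.φ v = 4 := (hbag v hv).trans h4
      refine (weight_of_φ_ne_two (by simp [hv4]) ?_ ?_ ?_ (by simpa using hvd)).le <;>
        rintro rfl <;> simp_all [D.φ_x, D.φ_u, D.φ_b]
    rw [Finset.sum_singleton, weight_d] at this
    nlinarith

lemma isSafeSet (hε : 0 < ε) (hNε : (Fintype.card V + 4) * ε = 1) :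
    IsSafeSet G (D.weight ε) (D.φ ⁻¹' {1, 3}) :=
  ⟨⟨D.x, by simp [D.φ_x]⟩, fun h => by simpa [D.φ_b] using Set.eq_univ_iff_forall.1 h D.b,
    fun _ _ hC hC' _ => (setWeight_le_one_add_sq hε hNε hC').trans (one_add_sq_le_setWeight hε hC)⟩

lemma setWeight_lt (hε : 0 < ε) (hNε : (Fintype.card V + 4) * ε = 1) :
    setWeight (D.weight ε) (D.φ ⁻¹' {1, 3}) < 2 + ε := by
  have hw : ∀ v, 0 ≤ D.weight ε v := fun v => (weight_pos hε v).le
  have hxu : D.x ≠ D.u := D.ne_of_φ_ne (by simp [D.φ_x, D.φ_u])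
  have := setWeight_le_sum_add (A := D.φ ⁻¹' {1, 3}) hw (pow_nonneg hε.le 3) {D.x, D.u}
      fun v hv hvxu => by
      simp only [Finset.mem_insert, Finset.mem_singleton, not_or] at hvxu
      have hv' : D.φ v = 1 ∨ D.φ v = 3 := hv
      refine (weight_of_φ_ne_two ?_ hvxu.1 ?_ hvxu.2 ?_).le
      · rcases hv' with h | h <;> simp [h]
      all_goals rintro rfl; rcases hv' with h | h <;> simp_all [D.φ_b, D.φ_d]
  rw [Finset.sum_pair hxu, weight_x, weight_u] at this
  nlinarith

lemma two_add_le_of_forall_lt_two (hG : G.Connected) (hε : 0 < ε)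
    (hT : IsConnSafeSet G (D.weight ε) T) (hside : ∀ v ∈ T, (D.φ v : ℕ) < 2) :
    2 + ε ≤ setWeight (D.weight ε) T := by
  have hw : ∀ v, 0 ≤ D.weight ε v := fun v => (weight_pos hε v).le
  set A := (D.φ ⁻¹' {3} ∪ {D.y₃, D.z₃}) ∪ {D.u, D.d}
  have hA : (G.induce A).Connected :=
    induce_union_connected (induce_union_connected D.connected_three.preconnected
      (induce_pair_connected_of_adj D.adj_y₃z₃).preconnected ⟨D.y₃, by simp [D.φ_y₃]⟩).preconnected
      (induce_pair_connected_of_adj D.adj_ud).preconnected ⟨D.u, by simp [D.φ_u]⟩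
  have hAT : Disjoint A T := Set.disjoint_left.2 fun v hvA hv => by
    have : 2 ≤ (D.φ v : ℕ) := by
      rcases hvA with (h | rfl | rfl) | rfl | rfl
      · simp [show D.φ v = 3 from h]
      all_goals simp [D.φ_y₃, D.φ_z₃, D.φ_u, D.φ_d]
    exact absurd (hside v hv) (by omega)
  have hud := add_add_le_setWeight hw (A := A) (a := D.u) (b := D.d) (c := D.z₃)
    (by simp [A]) (by simp [A]) (by simp [A]) (D.ne_of_φ_ne (by simp [D.φ_u, D.φ_d]))
    (D.ne_of_φ_ne (by simp [D.φ_u, D.φ_z₃])) (D.ne_of_φ_ne (by simp [D.φ_d, D.φ_z₃]))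
  rw [weight_u, weight_d, weight_of_φ_eq_two D.φ_z₃] at hud
  nlinarith [hT.setWeight_le hG hw hA hAT]

lemma two_add_le_of_not_mem (hG : G.Connected) (hε : 0 < ε)
    (hNε : (Fintype.card V + 4) * ε = 1) (hT : IsConnSafeSet G (D.weight ε) T)
    (hu : D.u ∉ T) (hd : D.d ∉ T) : 2 + ε ≤ setWeight (D.weight ε) T := by
  have hw : ∀ v, 0 ≤ D.weight ε v := fun v => (weight_pos hε v).le
  have hxb : D.x ≠ D.b := D.ne_of_φ_ne (by simp [D.φ_x, D.φ_b])
  have hQ : 2 + ε ^ 2 ≤ setWeight (D.weight ε) T := by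
    have := hT.setWeight_le hG hw (induce_pair_connected_of_adj D.adj_ud)
      (by simp [Set.disjoint_left, hu, hd])
    rw [setWeight_pair (D.ne_of_φ_ne (by simp [D.φ_u, D.φ_d])), weight_u, weight_d] at this
    linarith
  have hlight : ∀ v ∈ T, v ≠ D.x → v ≠ D.b → D.weight ε v ≤ ε := fun v hv hx hb =>
    weight_le hε.le (by nlinarith) hx hb (ne_of_mem_of_not_mem hv hu) (ne_of_mem_of_not_mem hv hd)
  have hxT : D.x ∈ T := by
    by_contra hxT
    have := setWeight_le_sum_add hw hε.le {D.b} fun v hv hvb =>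
      hlight v hv (ne_of_mem_of_not_mem hv hxT) (by simpa using hvb)
    rw [Finset.sum_singleton, weight_b] at this
    nlinarith
  have hbT : D.b ∈ T := by
    by_contra hbT
    have := setWeight_le_sum_add hw hε.le {D.x} fun v hv hvx =>
      hlight v hv (by simpa using hvx) (ne_of_mem_of_not_mem hv hbT)
    rw [Finset.sum_singleton, weight_x] at this
    nlinarith
  by_cases hz : ∃ z ∈ T, D.φ z = 2
  · obtain ⟨z, hzT, hz⟩ := hz
    have := add_add_le_setWeight hw hxT hbT hzT hxb (D.ne_of_φ_ne (by simp [D.φ_x, hz]))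
      (D.ne_of_φ_ne (by simp [D.φ_b, hz]))
    rw [weight_x, weight_b, weight_of_φ_eq_two hz] at this
    nlinarith
  · refine two_add_le_of_forall_lt_two hG hε hT fun v hv => ?_
    by_contra hv2
    obtain ⟨z, hzT, hz2⟩ := exists_eq_of_reachable_induce (f := fun v => (D.φ v : ℕ))
      D.le_succ_of_adj (hT.2.preconnected ⟨D.x, hxT⟩ ⟨v, hv⟩) (k := 2) (by simp [D.φ_x])
      (not_lt.1 hv2)
    exact hz ⟨z, hzT, Fin.ext hz2⟩

lemma two_add_le_of_mem (hε : 0 < ε) (hT : (G.induce T).Connected)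
    (hxb : D.x ∈ T ∨ D.b ∈ T) (hud : D.u ∈ T ∨ D.d ∈ T) :
    2 + ε ≤ setWeight (D.weight ε) T := by
  have hw : ∀ v, 0 ≤ D.weight ε v := fun v => (weight_pos hε v).le
  obtain ⟨p, hpT, hp, hpw⟩ : ∃ p ∈ T, (D.φ p : ℕ) ≤ 1 ∧ 1 ≤ D.weight ε p := by
    rcases hxb with h | h
    · exact ⟨D.x, h, by simp [D.φ_x], by rw [weight_x]; nlinarith⟩
    · exact ⟨D.b, h, by simp [D.φ_b], weight_b.ge⟩
  obtain ⟨q, hqT, hq, hqw⟩ : ∃ q ∈ T, 3 ≤ (D.φ q : ℕ) ∧ 1 ≤ D.weight ε q := by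
    rcases hud with h | h
    · exact ⟨D.u, h, by simp [D.φ_u], by rw [weight_u]; nlinarith⟩
    · exact ⟨D.d, h, by simp [D.φ_d], weight_d.ge⟩
  obtain ⟨z, hzT, hz⟩ := exists_eq_of_reachable_induce (f := fun v => (D.φ v : ℕ))
    D.le_succ_of_adj (hT.preconnected ⟨p, hpT⟩ ⟨q, hqT⟩) (k := 2) (by simp; omega)
    (by simp; omega)
  have := add_add_le_setWeight hw hpT hqT hzT (D.ne_of_φ_ne fun h => by simp [h] at hp; omega)
    (D.ne_of_φ_ne fun h => by simp [h] at hp; omega)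
    (D.ne_of_φ_ne fun h => by simp [h] at hq; omega)
  rw [weight_of_φ_eq_two (Fin.ext hz)] at this
  linarith

lemma two_add_le_setWeight (hG : G.Connected) (hε : 0 < ε)
    (hNε : (Fintype.card V + 4) * ε = 1) (hT : IsConnSafeSet G (D.weight ε) T) :
    2 + ε ≤ setWeight (D.weight ε) T := by
  by_cases hud : D.u ∉ T ∧ D.d ∉ T
  · exact two_add_le_of_not_mem hG hε hNε hT hud.1 hud.2
  by_cases hxb : D.x ∉ T ∧ D.b ∉ T
  · rw [← D.rev_weight] at hT ⊢
    exact two_add_le_of_not_mem hG hε hNε hT hxb.1 hxb.2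
  rw [not_and_or, not_not, not_not] at hud hxb
  exact two_add_le_of_mem hε hT.2 hxb hud

theorem not_inGcs (D : P5Data G) (hG : G.Connected) : ¬ InGcs G := by
  set ε : ℝ := 1 / (Fintype.card V + 4)
  have hε : 0 < ε := by positivity
  have hNε : (Fintype.card V + 4) * ε = 1 := mul_one_div_cancel (by positivity)
  exact not_inGcs_of_lt (weight_pos hε) (D.isSafeSet hε hNε) fun T hT =>
    (D.setWeight_lt hε hNε).trans_le (two_add_le_setWeight hG hε hNε hT)

end P5Data

theorem stmt_7 (G : SimpleGraph V) (hG : G.Connected) (φ : V → Fin 5)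
    (hφ : ContractibleTo G (pathGraph 5) φ)
    (h2 : (G.induce (φ ⁻¹' {1})).Connected)
    (h4 : (G.induce (φ ⁻¹' {3})).Connected) :
    ¬ InGcs G := by
  obtain ⟨D⟩ := nonempty_p5Data hφ h2 h4
  exact D.not_inGcs hG
end
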